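/- If p(x) = Πᵢ pᵢ(xᵢ) is a product distribution on X = X₁ × ⋯ × Xₙ, then there exists a potential θ (namely θ(x) = Σᵢ log pᵢ(xᵢ)) such that the perturb-max entropy bound is tight: H(p) = E_γ[ Σ_{i=1}^n γᵢ(x^γ_i) ], where x^γ = argmax_x { θ(x) + Σᵢ γᵢ(xᵢ) } with i.i.d. zero-mean Gumbel perturbations γᵢ(xᵢ). -/

import Mathlib

/-
Both the potential `θ x = ∑ i, log (p i (x i))` and the perturbation are sums over coordinates,
so a maximiser `x^γ` maximises every `log pᵢ + γᵢ` separately, and the expectation splits into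
one expectation per factor, just as the entropy of a product splits into the entropies of the
factors.

For one factor with potential `θ` and weights `q a = exp (θ a) / Z`, `Z = ∑ b, exp (θ b)`,
the coordinate `a` wins with perturbation value `t` exactly when every other `g b` lies below
`θ a + t - θ b`. By the Gumbel CDF `exp (-exp (-(t + γ)))` this has probability
`exp (-(1 / q a - 1) * exp (-(t + γ)))`, and the substitution `u = exp (-(t + γ))`, which maps
the Gumbel law to the standard exponential law, reduces `E[g a; a wins]` to the Laplace transform
`∫₀^∞ log u * exp (-λ u) du = -(γ + log λ) / λ` at `λ = 1 / q a`, that is to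
`q a * (log Z - θ a)`. Ties are null since the Gumbel law has no atoms.
-/

open MeasureTheory Real

/-- Density of the zero-mean Gumbel distribution, whose CDF is `exp (-exp (-(t + c)))`. -/
noncomputable def gumbelPDF (t : ℝ) : ℝ :=
  Real.exp (-(t + Real.eulerMascheroniConstant)) *
    Real.exp (-Real.exp (-(t + Real.eulerMascheroniConstant)))

/-- The zero-mean Gumbel measure on `ℝ`. -/
noncomputable def gumbel : Measure ℝ :=
  MeasureTheory.volume.withDensity fun t => ENNReal.ofReal (gumbelPDF t)

open Set Filter

section

local notation "γ" => Real.eulerMascheroniConstant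

theorem integral_log_mul_exp_neg : ∫ t in Ioi (0 : ℝ), log t * exp (-t) = -γ := by
  have hderiv : HasDerivAt Complex.Gamma
      ((∫ t in Ioi (0 : ℝ), log t * exp (-t) : ℝ) : ℂ) 1 := by
    have h := Complex.hasDerivAt_GammaIntegral (s := 1) (by norm_num)
    rw [← integral_complex_ofReal]
    refine (h.congr_deriv ?_).congr_of_eventuallyEq ?_
    · refine setIntegral_congr_fun measurableSet_Ioi fun t _ => ?_
      simp
    · filter_upwards [(isOpen_lt continuous_const Complex.continuous_re).mem_nhds
        (by norm_num : (0 : ℝ) < (1 : ℂ).re)] with s hs using Complex.Gamma_eq_integral hs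
  have h := hderiv.real_of_complex
  simp only [Complex.Gamma_ofReal, Complex.ofReal_re] at h
  simpa using h.unique Real.hasDerivAt_Gamma_one

-- The integral is `-γ ≠ 0`, which rules out the junk value of a non-integrable integrand.
theorem integrableOn_log_mul_exp_neg : IntegrableOn (fun t => log t * exp (-t)) (Ioi 0) :=
  Integrable.of_integral_ne_zero <| by
    rw [integral_log_mul_exp_neg]; linarith [one_half_lt_eulerMascheroniConstant]

theorem integrableOn_log_mul_mul_exp_neg_mul {c : ℝ} (hc : 0 < c) :
    IntegrableOn (fun t => log (c * t) * exp (-(c * t))) (Ioi 0) :=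
  (integrableOn_Ioi_comp_mul_left_iff (fun t => log t * exp (-t)) 0 hc).2
    (by simpa using integrableOn_log_mul_exp_neg)

theorem log_mul_exp_neg_mul_eq {c t : ℝ} (hc : 0 < c) (ht : 0 < t) :
    log t * exp (-c * t) = log (c * t) * exp (-(c * t)) - log c * exp (-c * t) := by
  rw [log_mul hc.ne' ht.ne', neg_mul]; ring

theorem integrableOn_log_mul_exp_neg_mul {c : ℝ} (hc : 0 < c) :
    IntegrableOn (fun t => log t * exp (-c * t)) (Ioi 0) :=
  ((integrableOn_log_mul_mul_exp_neg_mul hc).sub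
    ((exp_neg_integrableOn_Ioi 0 hc).const_mul _)).congr_fun
    (fun _ ht => (log_mul_exp_neg_mul_eq hc ht).symm) measurableSet_Ioi

theorem integral_log_mul_exp_neg_mul {c : ℝ} (hc : 0 < c) :
    ∫ t in Ioi (0 : ℝ), log t * exp (-c * t) = -(γ + log c) / c := by
  have h := integral_comp_mul_left_Ioi (fun t => log t * exp (-t)) 0 hc
  rw [mul_zero, integral_log_mul_exp_neg, smul_eq_mul] at h
  rw [setIntegral_congr_fun measurableSet_Ioi fun t ht => log_mul_exp_neg_mul_eq hc ht,
    integral_sub (integrableOn_log_mul_mul_exp_neg_mul hc)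
      ((exp_neg_integrableOn_Ioi 0 hc).const_mul _),
    h, integral_const_mul, integral_exp_mul_Ioi (neg_lt_zero.2 hc), mul_zero, exp_zero]
  field_simp
  ring

noncomputable def expToGumbel (u : ℝ) : ℝ := -log u - γ

noncomputable def stdExponential : Measure ℝ :=
  (volume.restrict (Ioi 0)).withDensity fun u => ENNReal.ofReal (exp (-u))

theorem measurable_expToGumbel : Measurable expToGumbel := by
  unfold expToGumbel; fun_prop

theorem exp_neg_add_expToGumbel {u : ℝ} (hu : 0 < u) : exp (-(expToGumbel u + γ)) = u := by
  rw [expToGumbel, show -(-log u - γ + γ) = log u by ring, exp_log hu]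

theorem gumbel_eq_map_stdExponential : gumbel = stdExponential.map expToGumbel := by
  refine Measure.ext fun S hS => ?_
  have hS' : MeasurableSet (expToGumbel ⁻¹' S ∩ Ioi 0) :=
    (measurable_expToGumbel hS).inter measurableSet_Ioi
  have himage : expToGumbel '' (expToGumbel ⁻¹' S ∩ Ioi 0) = S := by
    refine (image_preimage_inter _ _ _).trans (inter_eq_left.2 fun t _ => ?_)
    exact ⟨exp (-(t + γ)), exp_pos _, by simp [expToGumbel]⟩
  have hderiv : ∀ u ∈ expToGumbel ⁻¹' S ∩ Ioi 0,
      HasDerivWithinAt expToGumbel (-u⁻¹) (expToGumbel ⁻¹' S ∩ Ioi 0) u := fun u hu =>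
    ((hasDerivAt_log (ne_of_gt hu.2)).neg.sub_const γ).hasDerivWithinAt
  have hinj : InjOn expToGumbel (expToGumbel ⁻¹' S ∩ Ioi 0) := fun a ha b hb hab =>
    log_injOn_pos ha.2 hb.2 (by unfold expToGumbel at hab; linarith)
  rw [Measure.map_apply measurable_expToGumbel hS, gumbel, withDensity_apply _ hS,
    stdExponential, withDensity_apply _ (measurable_expToGumbel hS),
    Measure.restrict_restrict (measurable_expToGumbel hS), ← himage,
    lintegral_image_eq_lintegral_abs_deriv_mul hS' hderiv hinj, himage]
  refine setLIntegral_congr_fun hS' fun u ⟨_, (hu : 0 < u)⟩ => ?_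
  have hpdf : gumbelPDF (expToGumbel u) = u * exp (-u) := by
    rw [gumbelPDF, exp_neg_add_expToGumbel hu]
  rw [hpdf, abs_neg, abs_of_pos (inv_pos.2 hu), ← ENNReal.ofReal_mul (by positivity),
    ← mul_assoc, inv_mul_cancel₀ hu.ne', one_mul]

theorem integral_gumbel {G : ℝ → ℝ} (hG : AEStronglyMeasurable G gumbel) :
    ∫ t, G t ∂gumbel = ∫ u in Ioi 0, exp (-u) * G (expToGumbel u) := by
  rw [gumbel_eq_map_stdExponential] at hG ⊢
  rw [integral_map measurable_expToGumbel.aemeasurable hG, stdExponential,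
    integral_withDensity_eq_integral_toReal_smul (by fun_prop) (by simp)]
  simp only [ENNReal.toReal_ofReal (exp_pos _).le, smul_eq_mul]

theorem integrable_gumbel_iff {G : ℝ → ℝ} (hG : AEStronglyMeasurable G gumbel) :
    Integrable G gumbel ↔ IntegrableOn (fun u => exp (-u) * G (expToGumbel u)) (Ioi 0) := by
  rw [gumbel_eq_map_stdExponential] at hG ⊢
  rw [integrable_map_measure hG measurable_expToGumbel.aemeasurable, stdExponential,
    integrable_withDensity_iff (by fun_prop) (by simp), IntegrableOn]
  simp only [Function.comp_def, ENNReal.toReal_ofReal (exp_pos _).le, mul_comm]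

theorem stdExponential_inter_Ioi_zero (S : Set ℝ) :
    stdExponential (S ∩ Ioi 0) = stdExponential S := by
  rw [stdExponential, withDensity_apply' _, withDensity_apply' _,
    Measure.restrict_restrict' measurableSet_Ioi, Measure.restrict_restrict' measurableSet_Ioi,
    inter_assoc, inter_self]

theorem stdExponential_Ioi {c : ℝ} (hc : 0 ≤ c) :
    stdExponential (Ioi c) = ENNReal.ofReal (exp (-c)) := by
  rw [stdExponential, withDensity_apply _ measurableSet_Ioi,
    Measure.restrict_restrict measurableSet_Ioi, inter_eq_left.2 (Ioi_subset_Ioi hc),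
    ← ofReal_integral_eq_lintegral_ofReal, integral_exp_neg_Ioi]
  · exact (exp_neg_integrableOn_Ioi 0 one_pos).mono_set (Ioi_subset_Ioi hc) |>.congr_fun
      (fun u _ => by simp) measurableSet_Ioi
  · exact .of_forall fun u => (exp_pos _).le

theorem gumbel_Iio (x : ℝ) : gumbel (Iio x) = ENNReal.ofReal (exp (-exp (-(x + γ)))) := by
  have hpre : expToGumbel ⁻¹' Iio x ∩ Ioi 0 = Ioi (exp (-(x + γ))) := by
    ext u
    simp only [mem_inter_iff, mem_preimage, mem_Iio, mem_Ioi, expToGumbel]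
    constructor
    · rintro ⟨hx, hu⟩
      rw [← lt_log_iff_exp_lt hu]; linarith
    · intro hu
      have hu0 := (exp_pos _).trans hu
      rw [← lt_log_iff_exp_lt hu0] at hu
      exact ⟨by linarith, hu0⟩
  rw [gumbel_eq_map_stdExponential, Measure.map_apply measurable_expToGumbel measurableSet_Iio,
    ← stdExponential_inter_Ioi_zero, hpre, stdExponential_Ioi (exp_pos _).le]

instance : IsProbabilityMeasure gumbel := by
  constructor
  rw [gumbel_eq_map_stdExponential, Measure.map_apply measurable_expToGumbel MeasurableSet.univ,
    preimage_univ, ← stdExponential_inter_Ioi_zero, univ_inter, stdExponential_Ioi le_rfl]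
  simp

instance : NullSingletonClass gumbel :=
  ⟨fun x => withDensity_absolutelyContinuous _ _ (measure_singleton x)⟩

theorem exp_neg_mul_gumbel_integrand {c u : ℝ} (hu : 0 < u) :
    exp (-u) * (expToGumbel u * exp (-(c - 1) * exp (-(expToGumbel u + γ)))) =
      -(log u * exp (-c * u) + γ * exp (-c * u)) := by
  rw [exp_neg_add_expToGumbel hu, mul_left_comm, ← exp_add, expToGumbel]
  ring_nf

theorem integrable_gumbel_mul_exp {c : ℝ} (hc : 0 < c) :
    Integrable (fun t => t * exp (-(c - 1) * exp (-(t + γ)))) gumbel := by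
  rw [integrable_gumbel_iff (by fun_prop)]
  exact ((integrableOn_log_mul_exp_neg_mul hc).add
    ((exp_neg_integrableOn_Ioi 0 hc).const_mul γ)).neg.congr_fun
    (fun u hu => (exp_neg_mul_gumbel_integrand hu).symm) measurableSet_Ioi

theorem integral_gumbel_mul_exp {c : ℝ} (hc : 0 < c) :
    ∫ t, t * exp (-(c - 1) * exp (-(t + γ))) ∂gumbel = log c / c := by
  rw [integral_gumbel (by fun_prop),
    setIntegral_congr_fun measurableSet_Ioi fun u hu => exp_neg_mul_gumbel_integrand hu,
    integral_neg, integral_add (integrableOn_log_mul_exp_neg_mul hc)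
      ((exp_neg_integrableOn_Ioi 0 hc).const_mul γ),
    integral_log_mul_exp_neg_mul hc, integral_const_mul, integral_exp_mul_Ioi (neg_lt_zero.2 hc),
    mul_zero, exp_zero]
  field_simp
  ring

theorem integrable_id_gumbel : Integrable id gumbel := by
  simpa [Function.id_def] using integrable_gumbel_mul_exp one_pos

theorem measureReal_pi_gumbel_pi_Iio {A : Type*} [Fintype A] (x : A → ℝ) :
    (Measure.pi fun _ : A => gumbel).real (univ.pi fun b => Iio (x b)) =
      exp (-∑ b, exp (-(x b + γ))) := by
  simp only [measureReal_def, Measure.pi_pi, gumbel_Iio, ENNReal.toReal_prod,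
    ENNReal.toReal_ofReal (exp_pos _).le, ← exp_sum, Finset.sum_neg_distrib]

theorem measurePreserving_pi_eval_prod_pi_ne {A α : Type*} [Fintype A] [DecidableEq A]
    [MeasurableSpace α] (μ : Measure α) [SigmaFinite μ] (a : A) :
    MeasurePreserving (fun g : A → α => (g a, fun b : {b // b ≠ a} => g b))
      (Measure.pi fun _ => μ) (μ.prod (Measure.pi fun _ => μ)) := by
  -- the `Fintype` instance that `measurePreserving_piEquivPiSubtypeProd` is stated with
  let _ : Fintype {b // b = a} := Subtype.fintype _
  have hsplit := measurePreserving_piEquivPiSubtypeProd (fun _ : A => μ) (· = a)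
  exact ((measurePreserving_piUnique fun _ : {b // b = a} => μ).prod (.id _)).comp hsplit

theorem sum_subtype_ne_eq_sub {A M : Type*} [Fintype A] [DecidableEq A] [AddCommGroup M]
    (f : A → M) (a : A) : ∑ b : {b // b ≠ a}, f b = ∑ b, f b - f a := by
  rw [← Finset.sum_subtype (Finset.univ.erase a) (by simp) f,
    Finset.sum_erase_eq_sub (Finset.mem_univ a)]

section Argmax

variable {A : Type*}

def uniqueArgmaxSet (θ : A → ℝ) (a : A) : Set (A → ℝ) :=
  {g | ∀ b ≠ a, θ b + g b < θ a + g a}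

def tieSet (θ : A → ℝ) : Set (A → ℝ) :=
  {g | ∃ b b', b ≠ b' ∧ θ b + g b = θ b' + g b'}

theorem mem_uniqueArgmaxSet_iff {θ g : A → ℝ} {a : A} :
    g ∈ uniqueArgmaxSet θ a ↔
      (fun b : {b // b ≠ a} => g b) ∈ univ.pi fun b : {b // b ≠ a} => Iio (θ a + g a - θ b) := by
  simp only [uniqueArgmaxSet, mem_ofPred_eq, Set.mem_pi, mem_univ, mem_Iio, forall_const,
    Subtype.forall, lt_sub_iff_add_lt']

variable [Fintype A]

/-- A measurable version of `g ↦ g (argmax (θ + g))`, set to `0` when the maximiser is not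
unique. -/
noncomputable def perturbAtArgmax (θ g : A → ℝ) : ℝ :=
  ∑ a, (uniqueArgmaxSet θ a).indicator (fun g => g a) g

theorem measurableSet_uniqueArgmaxSet (θ : A → ℝ) (a : A) :
    MeasurableSet (uniqueArgmaxSet θ a) := by
  simp only [uniqueArgmaxSet, ofPred_forall]
  exact .iInter fun b => .iInter fun _ => measurableSet_lt (by fun_prop) (by fun_prop)

theorem measurable_perturbAtArgmax (θ : A → ℝ) : Measurable (perturbAtArgmax θ) :=
  Finset.measurable_sum _ fun a _ =>
    (measurable_pi_apply a).indicator (measurableSet_uniqueArgmaxSet θ a)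

theorem perturbAtArgmax_eq {θ g : A → ℝ} {a : A} (hg : g ∉ tieSet θ)
    (ha : ∀ b, θ b + g b ≤ θ a + g a) : perturbAtArgmax θ g = g a := by
  have hmem : g ∈ uniqueArgmaxSet θ a := fun b hb =>
    (ha b).lt_of_ne fun h => hg ⟨b, a, hb, h⟩
  rw [perturbAtArgmax, Fintype.sum_eq_single a, indicator_of_mem hmem]
  exact fun b hb => indicator_of_notMem (fun hb' => (hb' a (Ne.symm hb)).not_ge (ha b)) _

theorem measure_pi_setOf_eval_eq_add_eval (μ : Measure ℝ) [SigmaFinite μ]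
    [NullSingletonClass μ] {a b : A} (hb : b ≠ a) (c : ℝ) :
    (Measure.pi fun _ : A => μ) {g | g a = c + g b} = 0 := by
  classical
  have hS : MeasurableSet {p : ℝ × ({b // b ≠ a} → ℝ) | p.1 = c + p.2 ⟨b, hb⟩} :=
    measurableSet_eq_fun (by fun_prop) (by fun_prop)
  change (Measure.pi fun _ => μ)
    ((fun g : A → ℝ => (g a, fun b : {b // b ≠ a} => g b)) ⁻¹' {p | p.1 = c + p.2 ⟨b, hb⟩}) = 0
  rw [(measurePreserving_pi_eval_prod_pi_ne μ a).measure_preimage hS.nullMeasurableSet,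
    Measure.prod_apply_symm hS]
  simp

theorem ae_notMem_tieSet (μ : Measure ℝ) [SigmaFinite μ] [NullSingletonClass μ] (θ : A → ℝ) :
    ∀ᵐ g ∂(Measure.pi fun _ : A => μ), g ∉ tieSet θ := by
  have hsub : tieSet θ ⊆ ⋃ b, ⋃ b', ⋃ (_ : b' ≠ b), {g | g b = (θ b' - θ b) + g b'} := by
    rintro g ⟨b, b', hbb', h⟩
    simp only [mem_iUnion, mem_ofPred_eq]
    exact ⟨b, b', Ne.symm hbb', by linarith⟩
  refine measure_eq_zero_iff_ae_notMem.1 (measure_mono_null hsub ?_)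
  exact measure_iUnion_null fun b => measure_iUnion_null fun b' => measure_iUnion_null fun hb' =>
    measure_pi_setOf_eval_eq_add_eval μ hb' _

theorem integral_indicator_pi_Iio_gumbel [DecidableEq A] (θ : A → ℝ) (a : A) (t : ℝ) :
    ∫ z, (univ.pi fun b : {b // b ≠ a} => Iio (θ a + t - θ b)).indicator (fun _ => t) z
        ∂(Measure.pi fun _ => gumbel) =
      t * exp (-(exp (-θ a) * ∑ b, exp (θ b) - 1) * exp (-(t + γ))) := by
  have hsum : ∑ b : {b // b ≠ a}, exp (-(θ a + t - θ b + γ)) =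
      (exp (-θ a) * ∑ b, exp (θ b) - 1) * exp (-(t + γ)) := by
    have hterm (b : A) : exp (-(θ a + t - θ b + γ)) =
        exp (-θ a) * exp (θ b) * exp (-(t + γ)) := by
      rw [← exp_add, ← exp_add]; ring_nf
    simp only [hterm]
    rw [sum_subtype_ne_eq_sub (fun b => exp (-θ a) * exp (θ b) * exp (-(t + γ))),
      ← Finset.sum_mul, ← Finset.mul_sum, ← exp_add, neg_add_cancel, exp_zero]
    ring
  rw [integral_indicator_const _ (MeasurableSet.univ_pi fun _ => measurableSet_Iio),
    measureReal_pi_gumbel_pi_Iio, hsum, smul_eq_mul, mul_comm, neg_mul]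

theorem integrable_indicator_uniqueArgmaxSet (θ : A → ℝ) (a : A) :
    Integrable ((uniqueArgmaxSet θ a).indicator fun g => g a) (Measure.pi fun _ => gumbel) :=
  (integrable_comp_eval (i := a) integrable_id_gumbel).mono
    ((measurable_pi_apply a).indicator (measurableSet_uniqueArgmaxSet θ a)).aestronglyMeasurable
    (.of_forall fun g => norm_indicator_le_norm_self (fun g => g a) g)

theorem integral_indicator_uniqueArgmaxSet (θ : A → ℝ) (a : A) :
    ∫ g, (uniqueArgmaxSet θ a).indicator (fun g => g a) g ∂(Measure.pi fun _ => gumbel) =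
      exp (θ a) / (∑ b, exp (θ b)) * (log (∑ b, exp (θ b)) - θ a) := by
  classical
  have hZ : 0 < ∑ b, exp (θ b) := Finset.sum_pos (fun b _ => exp_pos _) ⟨a, Finset.mem_univ a⟩
  let S (t : ℝ) : Set ({b // b ≠ a} → ℝ) := univ.pi fun b => Iio (θ a + t - θ b)
  let F (p : ℝ × ({b // b ≠ a} → ℝ)) : ℝ := (S p.1).indicator (fun _ => p.1) p.2
  have hφ := measurePreserving_pi_eval_prod_pi_ne gumbel a
  have hF : (uniqueArgmaxSet θ a).indicator (fun g => g a) =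
      F ∘ fun g : A → ℝ => (g a, fun b : {b // b ≠ a} => g b) := by
    ext g
    by_cases hg : g ∈ uniqueArgmaxSet θ a
    · rw [Function.comp_apply, indicator_of_mem hg]
      exact (indicator_of_mem (mem_uniqueArgmaxSet_iff.1 hg) (fun _ => g a)).symm
    · rw [Function.comp_apply, indicator_of_notMem hg]
      exact (indicator_of_notMem (mt mem_uniqueArgmaxSet_iff.2 hg) (fun _ => g a)).symm
  have hFm : Measurable F := by
    have hS : MeasurableSet {p : ℝ × ({b // b ≠ a} → ℝ) | p.2 ∈ S p.1} := by
      simp only [S, Set.mem_pi, mem_univ, mem_Iio, forall_const, ofPred_forall]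
      exact .iInter fun b => measurableSet_lt (by fun_prop) (by fun_prop)
    exact measurable_fst.indicator hS
  have hFint : Integrable F (gumbel.prod (Measure.pi fun _ => gumbel)) :=
    (hφ.integrable_comp hFm.aestronglyMeasurable).1 (hF ▸ integrable_indicator_uniqueArgmaxSet θ a)
  have hinner (t : ℝ) : ∫ z, F (t, z) ∂(Measure.pi fun _ => gumbel) =
      t * exp (-(exp (-θ a) * ∑ b, exp (θ b) - 1) * exp (-(t + γ))) :=
    integral_indicator_pi_Iio_gumbel θ a t
  simp only [hF, Function.comp_apply]
  rw [← integral_map hφ.measurable.aemeasurable (hφ.map_eq ▸ hFm.aestronglyMeasurable),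
    hφ.map_eq, integral_prod F hFint]
  simp only [hinner]
  rw [integral_gumbel_mul_exp (by positivity), log_mul (exp_pos _).ne' hZ.ne', log_exp, exp_neg]
  field_simp
  ring

theorem integrable_perturbAtArgmax (θ : A → ℝ) :
    Integrable (perturbAtArgmax θ) (Measure.pi fun _ => gumbel) :=
  integrable_finsetSum _ fun a _ => integrable_indicator_uniqueArgmaxSet θ a

theorem integral_perturbAtArgmax (θ : A → ℝ) :
    ∫ g, perturbAtArgmax θ g ∂(Measure.pi fun _ => gumbel) =
      ∑ a, exp (θ a) / (∑ b, exp (θ b)) * (log (∑ b, exp (θ b)) - θ a) := by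
  simp only [perturbAtArgmax]
  rw [integral_finsetSum _ fun a _ => integrable_indicator_uniqueArgmaxSet θ a]
  exact Finset.sum_congr rfl fun a _ => integral_indicator_uniqueArgmaxSet θ a

end Argmax

end

section ProductDistribution

variable {ι : Type*} [Fintype ι] [DecidableEq ι] {X : ι → Type*}

theorem apply_le_of_forall_sum_le {f : ∀ i, X i → ℝ} {x : ∀ i, X i}
    (hx : ∀ y : ∀ i, X i, ∑ i, f i (y i) ≤ ∑ i, f i (x i)) (i : ι) (b : X i) :
    f i b ≤ f i (x i) := by
  have h := hx (Function.update x i b)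
  simp only [Function.apply_update f, Finset.sum_update_of_mem (Finset.mem_univ i)] at h
  rw [Finset.sum_eq_add_sum_sdiff_singleton_of_mem (Finset.mem_univ i)] at h
  linarith

variable [∀ i, Fintype (X i)]

theorem sum_prod_mul_apply {p : ∀ i, X i → ℝ} (hsum : ∀ i, ∑ a, p i a = 1) (j : ι)
    (f : X j → ℝ) : ∑ x : ∀ i, X i, (∏ i, p i (x i)) * f (x j) = ∑ a, p j a * f a := by
  let q := Function.update p j fun a => p j a * f a
  have hq (x : ∀ i, X i) : (∏ i, p i (x i)) * f (x j) = ∏ i, q i (x i) := by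
    simp only [q, Function.apply_update (fun i (r : X i → ℝ) => r (x i)),
      Finset.prod_update_of_mem (Finset.mem_univ j),
      Finset.prod_eq_mul_prod_sdiff_singleton_of_mem (Finset.mem_univ j) (fun i => p i (x i))]
    ring
  simp only [hq, ← Fintype.prod_sum]
  rw [Fintype.prod_eq_single j fun i hi => by simp [q, Function.update_of_ne hi, hsum]]
  simp [q]

theorem neg_sum_prod_mul_log_prod {p : ∀ i, X i → ℝ} (hpos : ∀ i a, 0 < p i a)
    (hsum : ∀ i, ∑ a, p i a = 1) :
    -∑ x : ∀ i, X i, (∏ i, p i (x i)) * log (∏ i, p i (x i)) =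
      ∑ i, -∑ a, p i a * log (p i a) := by
  simp only [log_prod fun i _ => (hpos i _).ne', Finset.mul_sum]
  rw [Finset.sum_comm, ← Finset.sum_neg_distrib]
  exact Finset.sum_congr rfl fun i _ => by rw [sum_prod_mul_apply hsum i fun a => log (p i a)]

end ProductDistribution

theorem stmt_9_general {n : ℕ} {X : Fin n → Type} [∀ i, Fintype (X i)]
    (p : ∀ i, X i → ℝ) (hpos : ∀ i, ∀ a : X i, 0 < p i a)
    (hsum : ∀ i, ∑ a : X i, p i a = 1) :
    ∃ θ : (∀ i, X i) → ℝ,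
      (θ = fun x => ∑ i : Fin n, Real.log (p i (x i))) ∧
      ∀ xstar : (∀ i, X i → ℝ) → ∀ i, X i,
        (∀ γ : ∀ i, X i → ℝ, ∀ x : ∀ i, X i,
          θ x + ∑ i : Fin n, γ i (x i)
            ≤ θ (xstar γ) + ∑ i : Fin n, γ i (xstar γ i)) →
        (-∑ x : ∀ i, X i, (∏ i : Fin n, p i (x i)) *
            Real.log (∏ i : Fin n, p i (x i)))
          = ∫ γ : ∀ i, X i → ℝ, (∑ i : Fin n, γ i (xstar γ i))
              ∂(Measure.pi fun i => Measure.pi fun _ : X i => gumbel) := by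
  refine ⟨_, rfl, fun xstar hmax => ?_⟩
  let θ (i : Fin n) (a : X i) : ℝ := log (p i a)
  let μ (i : Fin n) := Measure.pi fun _ : X i => gumbel
  have hae : ∀ᵐ γ ∂Measure.pi μ, ∑ i, γ i (xstar γ i) = ∑ i, perturbAtArgmax (θ i) (γ i) := by
    have hties (i : Fin n) := (measurePreserving_eval μ i).quasiMeasurePreserving.ae
      (ae_notMem_tieSet gumbel (θ i))
    filter_upwards [ae_all_iff.2 hties] with γ hγ
    refine Finset.sum_congr rfl fun i _ => (perturbAtArgmax_eq (hγ i) fun b => ?_).symm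
    refine apply_le_of_forall_sum_le (f := fun i a => θ i a + γ i a) (fun x => ?_) i b
    simpa only [Finset.sum_add_distrib] using hmax γ x
  rw [integral_congr_ae hae, neg_sum_prod_mul_log_prod hpos hsum,
    integral_finsetSum _ fun i _ => integrable_comp_eval (integrable_perturbAtArgmax (θ i))]
  refine Finset.sum_congr rfl fun i _ => ?_
  rw [integral_comp_eval (measurable_perturbAtArgmax _).aestronglyMeasurable,
    integral_perturbAtArgmax]
  simp [θ, exp_log (hpos i _), hsum i]

/-- For a product distribution `p(x) = Πᵢ pᵢ(xᵢ)` there is a potential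
(namely `θ(x) = Σᵢ log pᵢ(xᵢ)`) for which the perturb-max entropy bound is
tight: `H(p) = E_γ [Σᵢ γᵢ(x^γ_i)]`. -/
theorem stmt_9 {n : ℕ} {X : Fin n → Type} [∀ i, Fintype (X i)] [∀ i, Nonempty (X i)]
    (p : ∀ i, X i → ℝ) (hpos : ∀ i, ∀ a : X i, 0 < p i a)
    (hsum : ∀ i, ∑ a : X i, p i a = 1) :
    ∃ θ : (∀ i, X i) → ℝ,
      (θ = fun x => ∑ i : Fin n, Real.log (p i (x i))) ∧
      ∀ xstar : (∀ i, X i → ℝ) → ∀ i, X i,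
        (∀ γ : ∀ i, X i → ℝ, ∀ x : ∀ i, X i,
          θ x + ∑ i : Fin n, γ i (x i)
            ≤ θ (xstar γ) + ∑ i : Fin n, γ i (xstar γ i)) →
        (-∑ x : ∀ i, X i, (∏ i : Fin n, p i (x i)) *
            Real.log (∏ i : Fin n, p i (x i)))
          = ∫ γ : ∀ i, X i → ℝ, (∑ i : Fin n, γ i (xstar γ i))
              ∂(Measure.pi fun i => Measure.pi fun _ : X i => gumbel) :=
  stmt_9_general p hpos hsum
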